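/- (U_𝔭 on the E-expansion, Corollary 5.12) Assume 𝔽_q(T) ⊆ F, let 𝔪 ⊆ A be a nonzero ideal with 𝔭 ∤ 𝔪, and assume E satisfies its functional equation for all γ ∈ GL₂(A). Let f = Σ_{i=0}^{ℓ} f_{i,E}·E^i where each f_{i,E} : Ω → L is modular of weight k−2i and type m−i for Γ₀(𝔪𝔭). Then U_𝔭(f) = Σ_{i=0}^{ℓ} c_i·E^i pointwise on Ω, where c_i := ℘^i · Σ_{h=0}^{ℓ−i} (h+i choose i)·U_𝔭(f_{h+i,E}·E_𝔭^h), and each c_i is modular of weight k−2i and type m−i for Γ₀(𝔪𝔭) (so this is the E-expansion of U_𝔭(f)). -/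

import Mathlib

/-!
`E` is invariant under translation by `A`, so at the points `w = (z + Q)/℘` of `U_𝔭` one has
`E(w) = ℘ E(z) + E_𝔭(w)`. Expanding `f(w) = ∑ f_{h,E}(w) (℘ E(z) + E_𝔭(w))^h` binomially in
`℘ E(z)` and summing over `Q` gives the `E`-expansion. Its coefficients are modular because
`E_𝔭` is modular of weight 2 and type 1 for `Γ₀(𝔭)` (the non-modular terms of `E` and
`℘ δ_𝔭 E` cancel), and because `U_𝔭` preserves modularity for `Γ₀(𝔞)` with `𝔞 ⊆ 𝔭`: right
multiplication by `γ ∈ Γ₀(𝔞)` permutes the cosets `Γ₀(𝔞) (1, Q; 0, ℘)`.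
-/

noncomputable section

namespace DrinfeldQM

variable {L : Type*} [Field L]

/-- Entry `(i,j)` of `γ ∈ GL₂(F)`, viewed inside `L`. -/
def Mc (F : Subfield L) (γ : GL (Fin 2) F) (i j : Fin 2) : L :=
  ((γ : Matrix (Fin 2) (Fin 2) F) i j : L)

/-- Determinant of `γ ∈ GL₂(F)`, viewed inside `L`. -/
def detL (F : Subfield L) (γ : GL (Fin 2) F) : L :=
  ((γ : Matrix (Fin 2) (Fin 2) F).det : L)

/-- Automorphy factor `cz + d`. -/
def jf (F : Subfield L) (γ : GL (Fin 2) F) (z : L) : L :=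
  Mc F γ 1 0 * z + Mc F γ 1 1

/-- Fractional linear action of `GL₂(F)` on `L` (restricting to `Ω`). -/
def act (F : Subfield L) (γ : GL (Fin 2) F) (z : L) : L :=
  (Mc F γ 0 0 * z + Mc F γ 0 1) / jf F γ z

/-- The Drinfeld upper half plane `Ω = L ∖ F`. -/
def Omega (F : Subfield L) : Set L := {z | z ∉ F}

/-- The slash operator `f |_{k,m} γ` of weight `k` and type `m`. -/
def slash (F : Subfield L) (k m : ℤ) (f : L → L) (γ : GL (Fin 2) F) : L → L :=
  fun z => detL F γ ^ m * jf F γ z ^ (-k) * f (act F γ z)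

/-- `f` is quasi-modular of weight `k`, type `m` and depth `≤ ℓ` for the set `S ⊆ GL₂(F)`
with coefficient family `fam` (only the indices `0,…,ℓ` of `fam` are relevant). -/
def IsQM (F : Subfield L) (S : Set (GL (Fin 2) F)) (k m : ℤ) (ℓ : ℕ)
    (f : L → L) (fam : ℕ → L → L) : Prop :=
  Set.EqOn (fam 0) f (Omega F) ∧
    ∀ γ ∈ S, ∀ z ∈ Omega F,
      slash F k m f γ z =
        ∑ i ∈ Finset.range (ℓ + 1), fam i z * (Mc F γ 1 0 / jf F γ z) ^ i

/-- The coefficient family of the `i`-th coefficient `f_i` of a quasi-modular function with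
coefficient family `fam`:  `(f_i)_h = ((h+i) choose i) · f_{h+i}`. -/
def shiftFam (i : ℕ) (fam : ℕ → L → L) : ℕ → L → L :=
  fun h z => ((h + i).choose i : L) * fam (h + i) z

/-- The double-slash operator `f ∥_{k,m} γ` of a quasi-modular function of depth `≤ ℓ` with
coefficient family `fam`. -/
def dslash (F : Subfield L) (k m : ℤ) (ℓ : ℕ) (fam : ℕ → L → L)
    (γ : GL (Fin 2) F) : L → L :=
  fun z => ∑ i ∈ Finset.range (ℓ + 1),
    (-(Mc F γ 1 0) / jf F γ z) ^ i * detL F γ ^ (m - (i : ℤ)) *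
      jf F γ z ^ (2 * (i : ℤ) - k) * fam i (act F γ z)

/-- The double-slash operator on polynomial-valued functions `P : Ω → L[X]`:
`(P ∥_{k,m} γ)(z, X) = (det γ)^m (cz+d)^{-k} P(γ·z, ((cz+d)²/det γ)(X - c/(cz+d)))`. -/
def pdslash (F : Subfield L) (k m : ℤ) (P : L → Polynomial L)
    (γ : GL (Fin 2) F) : L → Polynomial L :=
  fun z =>
    Polynomial.C (detL F γ ^ m * jf F γ z ^ (-k)) *
      (P (act F γ z)).comp
        (Polynomial.C (jf F γ z ^ 2 / detL F γ) *
          (Polynomial.X - Polynomial.C (Mc F γ 1 0 / jf F γ z)))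

/-- The associated polynomial `P_f(z, X) = ∑_{i=0}^{ℓ} f_i(z) Xⁱ`. -/
def assocPoly (ℓ : ℕ) (fam : ℕ → L → L) : L → Polynomial L :=
  fun z => ∑ i ∈ Finset.range (ℓ + 1), Polynomial.C (fam i z) * Polynomial.X ^ i

/-- `E` satisfies the functional equation of the false Eisenstein series (weight 2, type 1,
depth 1, coefficient family `(E, -π⁻¹)`) for all `γ ∈ S`. -/
def EFunEq (F : Subfield L) (S : Set (GL (Fin 2) F)) (π : L) (E : L → L) : Prop :=
  ∀ γ ∈ S, ∀ z ∈ Omega F,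
    E (act F γ z) =
      (detL F γ)⁻¹ * jf F γ z ^ 2 * (E z - Mc F γ 1 0 / (π * jf F γ z))

variable {Fq : Type*} [Field Fq] [Fintype Fq]

/-- The image in `L` of a polynomial `r ∈ A = Fq[T]` under `A → F ⊆ L`. -/
def iL (F : Subfield L) (ι : Polynomial Fq →+* F) (r : Polynomial Fq) : L := (ι r : L)

/-- `γ ∈ GL₂(F)` lies in `Γ₀(𝔞) ⊆ GL₂(A)`: its entries come from a matrix `M` over
`A = Fq[T]` with unit determinant whose lower-left entry lies in `𝔞`.
Taking `𝔞 = ⊤` expresses membership in `GL₂(A)`. -/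
def InGamma0 (F : Subfield L) (ι : Polynomial Fq →+* F)
    (𝔞 : Ideal (Polynomial Fq)) (γ : GL (Fin 2) F) : Prop :=
  ∃ M : Matrix (Fin 2) (Fin 2) (Polynomial Fq),
    (∀ i j, iL F ι (M i j) = Mc F γ i j) ∧ IsUnit M.det ∧ M 1 0 ∈ 𝔞

/-- `γ ∈ GL₂(F)` lies in the principal congruence subgroup `Γ(𝔫) ⊆ GL₂(A)`. -/
def InGammaN (F : Subfield L) (ι : Polynomial Fq →+* F)
    (𝔫 : Ideal (Polynomial Fq)) (γ : GL (Fin 2) F) : Prop :=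
  ∃ M : Matrix (Fin 2) (Fin 2) (Polynomial Fq),
    (∀ i j, iL F ι (M i j) = Mc F γ i j) ∧ IsUnit M.det ∧
      ∀ i j, M i j - (1 : Matrix (Fin 2) (Fin 2) (Polynomial Fq)) i j ∈ 𝔫

/-- `g` is modular of weight `w` and type `t` for `Γ₀(𝔞)`. -/
def IsModularOn (F : Subfield L) (ι : Polynomial Fq →+* F)
    (𝔞 : Ideal (Polynomial Fq)) (w t : ℤ) (g : L → L) : Prop :=
  ∀ γ : GL (Fin 2) F, InGamma0 F ι 𝔞 γ → ∀ z ∈ Omega F, slash F w t g γ z = g z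

/-- The degeneracy map `(δ_𝔭 g)(z) = g(℘ z)`. -/
def deltaP (F : Subfield L) (ι : Polynomial Fq →+* F) (℘ : Polynomial Fq)
    (g : L → L) : L → L := fun z => g (iL F ι ℘ * z)

/-- The Atkin–Lehner operator `(U_𝔭 g)(z) = ∑_{Q ∈ A, deg Q < deg ℘} g((z+Q)/℘)`,
where `Q = ∑ᵢ cᵢ Tⁱ` ranges over polynomials of degree `< deg ℘`. -/
def UP (F : Subfield L) (ι : Polynomial Fq →+* F) (℘ : Polynomial Fq)
    (g : L → L) : L → L :=
  fun z => ∑ c : Fin ℘.natDegree → Fq,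
    g ((z + iL F ι (∑ i : Fin ℘.natDegree, Polynomial.C (c i) * Polynomial.X ^ (i : ℕ))) /
      iL F ι ℘)

/-- The `𝔭`-stabilization `E_𝔭 = E - ℘·δ_𝔭E`. -/
def Ep (F : Subfield L) (ι : Polynomial Fq →+* F) (℘ : Polynomial Fq)
    (E : L → L) : L → L := fun z => E z - iL F ι ℘ * deltaP F ι ℘ E z


open Polynomial Finset

section Geometry

variable {L : Type*} [Field L] (F : Subfield L)

lemma Mc_mem (γ : GL (Fin 2) F) (i j : Fin 2) : Mc F γ i j ∈ F := SetLike.coe_mem _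

lemma detL_eq_Mc (γ : GL (Fin 2) F) :
    detL F γ = Mc F γ 0 0 * Mc F γ 1 1 - Mc F γ 0 1 * Mc F γ 1 0 := by
  simp [detL, Mc, Matrix.det_fin_two]

lemma detL_ne_zero (γ : GL (Fin 2) F) : detL F γ ≠ 0 := by
  simpa [detL] using ((Matrix.isUnit_iff_isUnit_det _).mp γ.isUnit).ne_zero

lemma jf_ne_zero (γ : GL (Fin 2) F) {z : L} (hz : z ∈ Omega F) : jf F γ z ≠ 0 := by
  intro h0
  by_cases hc : Mc F γ 1 0 = 0
  · have hd : Mc F γ 1 1 = 0 := by simpa [jf, hc] using h0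
    exact detL_ne_zero F γ (by rw [detL_eq_Mc, hc, hd]; ring)
  · have hz' : z = -Mc F γ 1 1 / Mc F γ 1 0 := by
      rw [jf] at h0; field_simp; linear_combination h0
    exact hz (hz' ▸ F.div_mem (F.neg_mem (Mc_mem F γ 1 1)) (Mc_mem F γ 1 0))

variable {F}

lemma mul_add_mem_Omega {x y z : L} (hx : x ∈ F) (hx0 : x ≠ 0) (hy : y ∈ F)
    (hz : z ∈ Omega F) : x * z + y ∈ Omega F := by
  intro h
  have hz' : z = (x * z + y - y) / x := by field_simp; ring
  exact hz (hz' ▸ F.div_mem (F.sub_mem h hy) hx)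

end Geometry

section Embedding

variable {L : Type*} [Field L] {Fq : Type*} [Field Fq] {F : Subfield L}
  (ι : Polynomial Fq →+* F)

@[simp] lemma iL_zero : iL F ι 0 = 0 := map_zero (F.subtype.comp ι)

@[simp] lemma iL_one : iL F ι 1 = 1 := map_one (F.subtype.comp ι)

@[simp] lemma iL_add (r s : Polynomial Fq) : iL F ι (r + s) = iL F ι r + iL F ι s :=
  map_add (F.subtype.comp ι) r s

@[simp] lemma iL_sub (r s : Polynomial Fq) : iL F ι (r - s) = iL F ι r - iL F ι s :=
  map_sub (F.subtype.comp ι) r s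

@[simp] lemma iL_mul (r s : Polynomial Fq) : iL F ι (r * s) = iL F ι r * iL F ι s :=
  map_mul (F.subtype.comp ι) r s

lemma iL_mem (r : Polynomial Fq) : iL F ι r ∈ F := SetLike.coe_mem _

lemma iL_ne_zero {ι : Polynomial Fq →+* F} (hι : Function.Injective ι) {r : Polynomial Fq}
    (hr : r ≠ 0) : iL F ι r ≠ 0 := by
  simpa [iL] using (map_ne_zero_iff ι hι).mpr hr

def glOfMatrix (M : Matrix (Fin 2) (Fin 2) (Polynomial Fq)) (hM : IsUnit M.det) :
    GL (Fin 2) F :=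
  Matrix.GeneralLinearGroup.mkOfDetNeZero (M.map ι) (by
    rw [← RingHom.mapMatrix_apply, ← RingHom.map_det]
    exact (hM.map ι).ne_zero)

variable (M : Matrix (Fin 2) (Fin 2) (Polynomial Fq)) (hM : IsUnit M.det)

@[simp] lemma Mc_glOfMatrix (i j : Fin 2) : Mc F (glOfMatrix ι M hM) i j = iL F ι (M i j) :=
  rfl

lemma inGamma0_glOfMatrix {𝔞 : Ideal (Polynomial Fq)} (h𝔞 : M 1 0 ∈ 𝔞) :
    InGamma0 F ι 𝔞 (glOfMatrix ι M hM) :=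
  ⟨M, fun _ _ => rfl, hM, h𝔞⟩

lemma detL_eq_iL_det {γ : GL (Fin 2) F} (hγ : ∀ i j, iL F ι (M i j) = Mc F γ i j) :
    detL F γ = iL F ι M.det := by
  simp only [detL_eq_Mc, ← hγ, Matrix.det_fin_two, iL_sub, iL_mul]

@[simp] lemma detL_glOfMatrix : detL F (glOfMatrix ι M hM) = iL F ι M.det :=
  detL_eq_iL_det ι M fun _ _ => rfl

end Embedding

section Modular

variable {L : Type*} [Field L] {Fq : Type*} [Field Fq] {F : Subfield L}
  {ι : Polynomial Fq →+* F} {𝔞 : Ideal (Polynomial Fq)}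

namespace IsModularOn

lemma mono {𝔟 : Ideal (Polynomial Fq)} (h : 𝔞 ≤ 𝔟) {w t : ℤ} {g : L → L}
    (hg : IsModularOn F ι 𝔟 w t g) : IsModularOn F ι 𝔞 w t g := by
  rintro γ ⟨M, hM, hdet, hc⟩ z hz
  exact hg γ ⟨M, hM, hdet, h hc⟩ z hz

lemma mul {w₁ t₁ w₂ t₂ w t : ℤ} {g₁ g₂ : L → L}
    (h₁ : IsModularOn F ι 𝔞 w₁ t₁ g₁) (h₂ : IsModularOn F ι 𝔞 w₂ t₂ g₂)
    (hw : w = w₁ + w₂) (ht : t = t₁ + t₂) :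
    IsModularOn F ι 𝔞 w t (fun z => g₁ z * g₂ z) := by
  intro γ hγ z hz
  show _ = g₁ z * g₂ z
  rw [← h₁ γ hγ z hz, ← h₂ γ hγ z hz]
  simp only [slash, hw, ht, zpow_add₀ (detL_ne_zero F γ), neg_add,
    zpow_add₀ (jf_ne_zero F γ hz)]
  ring

lemma pow {w t : ℤ} {g : L → L} (hg : IsModularOn F ι 𝔞 w t g) (n : ℕ) :
    IsModularOn F ι 𝔞 (n * w) (n * t) (fun z => g z ^ n) := by
  induction n with
  | zero => intro γ _ z _; simp [slash]
  | succ n ih =>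
    simpa only [← pow_succ] using ih.mul hg (by push_cast; ring) (by push_cast; ring)

lemma const_mul {w t : ℤ} {g : L → L} (a : L) (hg : IsModularOn F ι 𝔞 w t g) :
    IsModularOn F ι 𝔞 w t (fun z => a * g z) := by
  intro γ hγ z hz
  show _ = a * g z
  rw [← hg γ hγ z hz]
  simp only [slash]
  ring

lemma sum {w t : ℤ} {β : Type*} {s : Finset β} {g : β → L → L}
    (hg : ∀ j ∈ s, IsModularOn F ι 𝔞 w t (g j)) :
    IsModularOn F ι 𝔞 w t (fun z => ∑ j ∈ s, g j z) := by
  intro γ hγ z hz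
  simp only [slash, Finset.mul_sum]
  exact Finset.sum_congr rfl fun j hj => hg j hj γ hγ z hz

end IsModularOn

end Modular

section FalseEisenstein

variable {L : Type*} [Field L] {Fq : Type*} [Field Fq] {F : Subfield L}
  {ι : Polynomial Fq →+* F} {π : L} {E : L → L} {℘ : Polynomial Fq}

namespace EFunEq

lemma add_iL (hE : EFunEq F {γ | InGamma0 F ι ⊤ γ} π E) (r : Polynomial Fq) {z : L}
    (hz : z ∈ Omega F) : E (z + iL F ι r) = E z := by
  have hdet : IsUnit (!![1, r; 0, 1] : Matrix (Fin 2) (Fin 2) (Polynomial Fq)).det := by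
    simp [Matrix.det_fin_two_of]
  simpa [act, jf, Matrix.det_fin_two_of] using
    hE (glOfMatrix ι _ hdet) (inGamma0_glOfMatrix ι _ hdet trivial) z hz

lemma div_eq_mul_add_Ep (hE : EFunEq F {γ | InGamma0 F ι ⊤ γ} π E) (h℘ : iL F ι ℘ ≠ 0)
    (r : Polynomial Fq) {z : L} (hz : z ∈ Omega F) :
    E ((z + iL F ι r) / iL F ι ℘) =
      iL F ι ℘ * E z + Ep F ι ℘ E ((z + iL F ι r) / iL F ι ℘) := by
  rw [Ep, deltaP, mul_div_cancel₀ _ h℘, hE.add_iL r hz]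
  ring

/-- `E_𝔭` is modular of weight 2 and type 1 for `Γ₀(𝔭)`: for `γ = (a, b; ℘c', d)`, the
matrix `(a, ℘b; c', d)` carries `℘z` to `℘(γ·z)` with the same automorphy factor, so the
non-modular terms of `E(γ·z)` and `℘E(℘γ·z)` cancel. -/
lemma isModularOn_Ep (hE : EFunEq F {γ | InGamma0 F ι ⊤ γ} π E) (h℘ : iL F ι ℘ ≠ 0) :
    IsModularOn F ι (Ideal.span {℘}) 2 1 (Ep F ι ℘ E) := by
  rintro γ ⟨M, hM, hdet, hc⟩ z hz
  obtain ⟨c', hc'⟩ := Ideal.mem_span_singleton'.mp hc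
  simp only [slash, Ep, deltaP]
  set P := iL F ι ℘
  have hdet' : (!![M 0 0, ℘ * M 0 1; c', M 1 1]).det = M.det := by
    rw [Matrix.det_fin_two_of, Matrix.det_fin_two, ← hc']
    ring
  set γ' := glOfMatrix ι _ (hdet' ▸ hdet)
  have hPz : P * z ∈ Omega F := by
    simpa using mul_add_mem_Omega (iL_mem ι ℘) h℘ F.zero_mem hz
  have hγc : Mc F γ 1 0 = iL F ι c' * P := by rw [← hM, ← hc', iL_mul]
  have hj : jf F γ' (P * z) = jf F γ z := by
    simp [γ', jf, ← hM 1 1, hγc]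
    ring
  have hact : act F γ' (P * z) = P * act F γ z := by
    simp [γ', act, hj, ← hM 0 0, ← hM 0 1]
    ring
  have h₁ := hE γ ⟨M, hM, hdet, trivial⟩ z hz
  have h₂ := hE γ' (inGamma0_glOfMatrix ι _ _ trivial) (P * z) hPz
  rw [hj, hact, show detL F γ' = detL F γ by simp [γ', hdet', detL_eq_iL_det ι M hM]] at h₂
  have hγ'c : Mc F γ' 1 0 = iL F ι c' := by simp [γ']
  rw [h₁, h₂, hγ'c, hγc, zpow_one, mul_div_assoc]
  have := detL_ne_zero F γ
  have := jf_ne_zero F γ hz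
  field_simp
  ring

end EFunEq

end FalseEisenstein

section Residues

variable {Fq : Type*} [Field Fq]

/-- The `Q` of degree `< n` summed over in `UP`, indexed by their coefficient vectors. -/
def polyOfCoeffs {n : ℕ} (v : Fin n → Fq) : Polynomial Fq :=
  ∑ i : Fin n, C (v i) * X ^ (i : ℕ)

lemma mk_polyOfCoeffs {℘ : Polynomial Fq} (hmon : ℘.Monic) (v : Fin ℘.natDegree → Fq) :
    AdjoinRoot.mk ℘ (polyOfCoeffs v) = (AdjoinRoot.powerBasisAux' hmon).equivFun.symm v := by
  simp [AdjoinRoot.powerBasisAux', polyOfCoeffs, C_mul_X_pow_eq_monomial]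

/-- Since `a` and `d` are units mod `℘`, `Q ↦ Q'` with `a Q' ≡ b + Q d (mod ℘)` permutes the
residues of degree `< deg ℘`. -/
lemma exists_bijective_polyOfCoeffs_dvd [Fintype Fq] {℘ : Polynomial Fq} (hmon : ℘.Monic)
    {a b c d : Polynomial Fq} (hc : ℘ ∣ c) (hdet : IsUnit (a * d - b * c)) :
    ∃ τ : (Fin ℘.natDegree → Fq) → Fin ℘.natDegree → Fq, τ.Bijective ∧
      ∀ v, ℘ ∣ b + polyOfCoeffs v * d - (a + polyOfCoeffs v * c) * polyOfCoeffs (τ v) := by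
  have hc₀ : AdjoinRoot.mk ℘ c = 0 := AdjoinRoot.mk_eq_zero.mpr hc
  have had : IsUnit (AdjoinRoot.mk ℘ a * AdjoinRoot.mk ℘ d) := by
    simpa [hc₀] using hdet.map (AdjoinRoot.mk ℘)
  obtain ⟨u, hu⟩ := isUnit_of_mul_isUnit_left had
  have hd := isUnit_of_mul_isUnit_right had
  set e := (AdjoinRoot.powerBasisAux' hmon).equivFun
  refine ⟨fun v => e (↑u⁻¹ * (AdjoinRoot.mk ℘ b + e.symm v * AdjoinRoot.mk ℘ d)),
    ?_, ?_⟩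
  · refine Finite.injective_iff_bijective.mp fun v w hvw => e.symm.injective ?_
    simpa [hd.mul_left_inj] using hvw
  · intro v
    rw [← AdjoinRoot.mk_eq_zero]
    simp only [map_sub, map_add, map_mul, mk_polyOfCoeffs hmon, hc₀, mul_zero, add_zero]
    rw [LinearEquiv.symm_apply_apply, ← hu, Units.mul_inv_cancel_left, sub_self]

end Residues

section AtkinLehner

variable {L : Type*} [Field L] {Fq : Type*} [Field Fq] {F : Subfield L}
  {ι : Polynomial Fq →+* F} {℘ : Polynomial Fq}

lemma UP_sum_mul [Fintype Fq] {β : Type*} (s : Finset β) (a : β → L) (g : β → L → L)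
    (z : L) :
    UP F ι ℘ (fun w => ∑ j ∈ s, a j * g j w) z = ∑ j ∈ s, a j * UP F ι ℘ (g j) z := by
  simp only [UP, Finset.mul_sum]
  exact Finset.sum_comm

/-- If `a Q' ≡ b + Q d (mod ℘)` then `(1, Q; 0, ℘) γ = γ' (1, Q'; 0, ℘)` with
`γ' = (a + Qc, b'; ℘c, d - cQ') ∈ Γ₀(𝔞)`, where `℘ b' = b + Qd - (a + Qc)Q'`. -/
lemma IsModularOn.slash_comp_translate_div {𝔞 : Ideal (Polynomial Fq)} {w t : ℤ} {g : L → L}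
    (hg : IsModularOn F ι 𝔞 w t g) (h℘ : iL F ι ℘ ≠ 0) {γ : GL (Fin 2) F}
    {M : Matrix (Fin 2) (Fin 2) (Polynomial Fq)} (hM : ∀ i j, iL F ι (M i j) = Mc F γ i j)
    (hdet : IsUnit M.det) (hc : M 1 0 ∈ 𝔞) {Q Q' : Polynomial Fq}
    (hQ : ℘ ∣ M 0 1 + Q * M 1 1 - (M 0 0 + Q * M 1 0) * Q') {z : L} (hz : z ∈ Omega F) :
    slash F w t (fun u => g ((u + iL F ι Q) / iL F ι ℘)) γ z =
      g ((z + iL F ι Q') / iL F ι ℘) := by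
  obtain ⟨b', hb'⟩ := hQ
  have hdet' : (!![M 0 0 + Q * M 1 0, b'; ℘ * M 1 0, M 1 1 - M 1 0 * Q']).det = M.det := by
    rw [Matrix.det_fin_two_of, Matrix.det_fin_two]
    linear_combination M 1 0 * hb'
  set γ' := glOfMatrix ι _ (hdet' ▸ hdet)
  set w' := (z + iL F ι Q') / iL F ι ℘
  have hw' : w' ∈ Omega F := by
    convert mul_add_mem_Omega (F.inv_mem (iL_mem ι ℘)) (inv_ne_zero h℘)
      (F.div_mem (iL_mem ι Q') (iL_mem ι ℘)) hz using 1
    ring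
  have hj : jf F γ' w' = jf F γ z := by
    simp [γ', w', jf, ← hM]
    field_simp
    ring
  have hb'L := congrArg (iL F ι) hb'
  simp only [iL_add, iL_sub, iL_mul] at hb'L
  have hact : act F γ' w' = (act F γ z + iL F ι Q) / iL F ι ℘ := by
    have hj0 := jf_ne_zero F γ hz
    rw [act, hj, act]
    simp [γ', w', jf, ← hM] at hj0 ⊢
    field_simp
    linear_combination -hb'L
  have := hg γ' (inGamma0_glOfMatrix ι _ _ (Ideal.mul_mem_left 𝔞 ℘ hc)) w' hw'
  rwa [slash, hj, hact, show detL F γ' = detL F γ by simp [γ', hdet', detL_eq_iL_det ι M hM]]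
    at this

lemma isModularOn_UP [Fintype Fq] (hmon : ℘.Monic) (h℘ : iL F ι ℘ ≠ 0)
    {𝔞 : Ideal (Polynomial Fq)} (h𝔞 : 𝔞 ≤ Ideal.span {℘}) {w t : ℤ} {g : L → L}
    (hg : IsModularOn F ι 𝔞 w t g) : IsModularOn F ι 𝔞 w t (UP F ι ℘ g) := by
  rintro γ ⟨M, hM, hdet, hc⟩ z hz
  obtain ⟨τ, hτ, hτQ⟩ := exists_bijective_polyOfCoeffs_dvd hmon
    (Ideal.mem_span_singleton.mp (h𝔞 hc)) (Matrix.det_fin_two M ▸ hdet)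
  calc slash F w t (UP F ι ℘ g) γ z
      = ∑ v, slash F w t (fun u => g ((u + iL F ι (polyOfCoeffs v)) / iL F ι ℘)) γ z :=
        Finset.mul_sum _ _ _
    _ = ∑ v, g ((z + iL F ι (polyOfCoeffs (τ v))) / iL F ι ℘) :=
        Finset.sum_congr rfl fun v _ => hg.slash_comp_translate_div h℘ hM hdet hc (hτQ v) hz
    _ = UP F ι ℘ g z := hτ.sum_comp fun v => g ((z + iL F ι (polyOfCoeffs v)) / iL F ι ℘)

end AtkinLehner

lemma sum_mul_add_pow {R : Type*} [CommSemiring R] (f : ℕ → R) (x y : R) (ℓ : ℕ) :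
    ∑ h ∈ range (ℓ + 1), f h * (x + y) ^ h =
      ∑ i ∈ range (ℓ + 1), x ^ i *
        ∑ h ∈ range (ℓ - i + 1), ((h + i).choose i : R) * (f (h + i) * y ^ h) := by
  simp_rw [add_pow, Finset.mul_sum]
  rw [Finset.sum_comm' (t' := range (ℓ + 1)) (s' := fun i => Ico i (ℓ + 1)) (by
    intro h i; simp only [mem_range, mem_Ico]; omega)]
  refine Finset.sum_congr rfl fun i hi => ?_
  rw [Finset.sum_Ico_eq_sum_range, show ℓ + 1 - i = ℓ - i + 1 by grind]
  refine Finset.sum_congr rfl fun h _ => ?_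
  rw [add_comm i h, Nat.add_sub_cancel]
  ring

theorem Up_E_expansion_general
    {L : Type*} [Field L] {Fq : Type*} [Field Fq] [Fintype Fq]
    (F : Subfield L) (ι : Polynomial Fq →+* F) (hι : Function.Injective ι)
    (℘ : Polynomial Fq) (hmon : ℘.Monic)
    (𝔪 : Ideal (Polynomial Fq))
    (π : L) (E : L → L)
    (hE : EFunEq F {γ : GL (Fin 2) F | InGamma0 F ι ⊤ γ} π E)
    (k m : ℤ) (ℓ : ℕ) (fE : ℕ → L → L)
    (hmod : ∀ i ≤ ℓ, IsModularOn F ι (𝔪 * Ideal.span {℘})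
      (k - 2 * (i : ℤ)) (m - (i : ℤ)) (fE i))
    (f : L → L)
    (hf : ∀ z, f z = ∑ i ∈ Finset.range (ℓ + 1), fE i z * E z ^ i)
    (c : ℕ → L → L)
    (hc : ∀ i z, c i z = iL F ι ℘ ^ i *
      ∑ h ∈ Finset.range (ℓ - i + 1),
        ((h + i).choose i : L) *
          UP F ι ℘ (fun w => fE (h + i) w * Ep F ι ℘ E w ^ h) z) :
    (∀ z ∈ Omega F,
        UP F ι ℘ f z = ∑ i ∈ Finset.range (ℓ + 1), c i z * E z ^ i) ∧
      ∀ i ≤ ℓ, IsModularOn F ι (𝔪 * Ideal.span {℘})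
        (k - 2 * (i : ℤ)) (m - (i : ℤ)) (c i) := by
  have h℘ : iL F ι ℘ ≠ 0 := iL_ne_zero hι hmon.ne_zero
  refine ⟨fun z hz => ?_, fun i hi => ?_⟩
  · calc UP F ι ℘ f z
        = UP F ι ℘ (fun w => ∑ i ∈ range (ℓ + 1), (iL F ι ℘ * E z) ^ i *
            ∑ h ∈ range (ℓ - i + 1), ((h + i).choose i : L) *
              (fE (h + i) w * Ep F ι ℘ E w ^ h)) z :=
          Finset.sum_congr rfl fun v _ => by
            rw [hf, hE.div_eq_mul_add_Ep h℘ _ hz, sum_mul_add_pow]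
      _ = ∑ i ∈ range (ℓ + 1), c i z * E z ^ i := by
          simp only [UP_sum_mul, hc, mul_pow]
          exact Finset.sum_congr rfl fun i _ => by ring
  · rw [show c i = _ from funext (hc i)]
    refine (IsModularOn.sum fun h hh => ?_).const_mul _
    refine (isModularOn_UP hmon h℘ Ideal.mul_le_right ?_).const_mul _
    have hEp : IsModularOn F ι (𝔪 * Ideal.span {℘}) 2 1 (Ep F ι ℘ E) :=
      (hE.isModularOn_Ep h℘).mono Ideal.mul_le_right
    exact (hmod (h + i) (by grind)).mul (hEp.pow h) (by push_cast; ring) (by push_cast; ring)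

/-- Corollary 5.12: the E-expansion of `U_𝔭(f)`. -/
theorem Up_E_expansion
    {L : Type*} [Field L] {Fq : Type*} [Field Fq] [Fintype Fq]
    (F : Subfield L) (ι : Polynomial Fq →+* F) (hι : Function.Injective ι)
    (℘ : Polynomial Fq) (hmon : ℘.Monic) (hirr : Irreducible ℘)
    (𝔪 : Ideal (Polynomial Fq)) (h𝔪 : ¬ 𝔪 ≤ Ideal.span {℘})
    (π : L) (hπ : π ≠ 0) (E : L → L)
    (hE : EFunEq F {γ : GL (Fin 2) F | InGamma0 F ι ⊤ γ} π E)
    (k m : ℤ) (ℓ : ℕ) (fE : ℕ → L → L)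
    (hmod : ∀ i ≤ ℓ, IsModularOn F ι (𝔪 * Ideal.span {℘})
      (k - 2 * (i : ℤ)) (m - (i : ℤ)) (fE i))
    (f : L → L)
    (hf : ∀ z, f z = ∑ i ∈ Finset.range (ℓ + 1), fE i z * E z ^ i)
    (c : ℕ → L → L)
    (hc : ∀ i z, c i z = iL F ι ℘ ^ i *
      ∑ h ∈ Finset.range (ℓ - i + 1),
        ((h + i).choose i : L) *
          UP F ι ℘ (fun w => fE (h + i) w * Ep F ι ℘ E w ^ h) z) :
    (∀ z ∈ Omega F,
        UP F ι ℘ f z = ∑ i ∈ Finset.range (ℓ + 1), c i z * E z ^ i) ∧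
      ∀ i ≤ ℓ, IsModularOn F ι (𝔪 * Ideal.span {℘})
        (k - 2 * (i : ℤ)) (m - (i : ℤ)) (c i) :=
  Up_E_expansion_general F ι hι ℘ hmon 𝔪 π E hE k m ℓ fE hmod f hf c hc

end DrinfeldQM
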